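/- Under the hypotheses of the Lipschitz-case convergence theorem (H Hilbert, Ω ⊆ H open, F : Ω → H continuously Fréchet differentiable, T maximal monotone, x* ∈ Ω with 0 ∈ F(x*) + T(x*), F'(x*) positive-semidefinite, F̂'(x*) := (F'(x*)+F'(x*)*)/2 boundedly invertible, K > 0 with ‖F̂'(x*)⁻¹‖·‖F'(x) − F'(y)‖ ≤ K‖x − y‖ for all x, y ∈ Ω, κ := sup{t > 0 : B(x*,t) ⊂ Ω}, r := min{κ, 2/(3K)}), let x₀ ∈ B(x*, r) \ {x*} and let {x_k} be a Newton sequence: 0 ∈ F(x_k) + F'(x_k)(x_{k+1} − x_k) + T(x_{k+1}) for all k. Then ‖x* − x_k‖ ≤ (2/(3K)) · ((3K/2)‖x* − x₀‖)^{2^k} for all k = 0, 1, …. -/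

import Mathlib

/-!
Write `e = ‖x* - x‖` for a Newton iterate `x`, `x'` for its successor, `d = x' - x*`, and
`G = F̂'(x*)⁻¹`. Monotonicity of `T`, tested at `(x*, -F x*)` and `(x', -F x - F'(x)(x' - x))`,
gives `⟪F'(x) d, d⟫ ≤ ⟪R, d⟫`, where `R` is the second-order Taylor remainder of `F` at `x`, so
`‖G‖ ‖R‖ ≤ K e² / 2`. Cauchy–Schwarz for the positive form of `F̂'(x*)` gives the coercivity
`‖w‖² ≤ ‖G‖ ⟪F'(x*) w, w⟫`, and replacing `F'(x*)` by `F'(x)` costs at most `K e ‖d‖²`. Hence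
`(1 - K e) ‖d‖ ≤ K e² / 2`, so `‖d‖ ≤ (3K/2) e²` as long as `K e < 2/3`, and this quadratic
recursion stays in the ball and yields the rate.
-/

open RealInnerProductSpace Filter Metric Set

/-- A set-valued operator `T : H ⇉ H` is monotone if `⟨u - v, y - x⟩ ≥ 0` whenever
`u ∈ T y` and `v ∈ T x`; it is maximal monotone if moreover every pair `(x, u)` that is
monotonically related to the graph of `T` belongs to the graph of `T`. -/
def IsMaximalMonotone {H : Type*} [NormedAddCommGroup H] [InnerProductSpace ℝ H]
    (T : H → Set H) : Prop :=
  (∀ x y u v : H, u ∈ T y → v ∈ T x → 0 ≤ ⟪u - v, y - x⟫) ∧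
  (∀ x u : H, (∀ y v : H, v ∈ T y → 0 ≤ ⟪u - v, x - y⟫) → u ∈ T x)

theorem zero_mem_image_add_iff {G : Type*} [AddGroup G] {a : G} {S : Set G} :
    (0 : G) ∈ (fun w => a + w) '' S ↔ -a ∈ S := by
  simp [image_add_left]

theorem exists_ball_subset_of_dist_lt_sSup {X : Type*} [PseudoMetricSpace X] {Ω : Set X}
    {xs z : X} (hz : dist xs z < sSup {u : ℝ | 0 < u ∧ ball xs u ⊆ Ω}) :
    ∃ ρ, z ∈ ball xs ρ ∧ ball xs ρ ⊆ Ω := by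
  rcases eq_empty_or_nonempty {u : ℝ | 0 < u ∧ ball xs u ⊆ Ω} with hempty | hne
  · rw [hempty, Real.sSup_empty] at hz
    exact absurd hz (dist_nonneg).not_gt
  · obtain ⟨ρ, ⟨-, hρ⟩, hzρ⟩ := exists_lt_of_lt_csSup hne hz
    exact ⟨ρ, mem_ball'.2 hzρ, hρ⟩

theorem le_inv_mul_pow_two_pow_of_le_mul_sq {c r : ℝ} (hc : 0 < c) {e : ℕ → ℝ}
    (he : ∀ k, 0 ≤ e k) (h0 : e 0 < r) (hr : r ≤ c⁻¹)
    (hstep : ∀ k, e k < r → e (k + 1) ≤ c * e k ^ 2) (k : ℕ) :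
    e k ≤ c⁻¹ * (c * e 0) ^ 2 ^ k := by
  have hq0 : 0 ≤ c * e 0 := mul_nonneg hc.le (he 0)
  have hq1 : c * e 0 ≤ 1 := by
    have := mul_le_mul_of_nonneg_left (h0.le.trans hr) hc.le
    rwa [mul_inv_cancel₀ hc.ne'] at this
  induction k with
  | zero => field_simp; simp
  | succ k ih =>
    have hek : e k < r := calc
      e k ≤ c⁻¹ * (c * e 0) ^ 2 ^ k := ih
      _ ≤ c⁻¹ * (c * e 0) ^ 1 :=
          mul_le_mul_of_nonneg_left (pow_le_pow_of_le_one hq0 hq1 Nat.one_le_two_pow)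
            (inv_nonneg.2 hc.le)
      _ = e 0 := by field_simp
      _ < r := h0
    calc e (k + 1) ≤ c * e k ^ 2 := hstep k hek
      _ ≤ c * (c⁻¹ * (c * e 0) ^ 2 ^ k) ^ 2 := by gcongr; exact he k
      _ = c⁻¹ * (c * e 0) ^ 2 ^ (k + 1) := by
          rw [pow_succ 2 k, pow_mul]; field_simp

theorem Convex.norm_image_sub_sub_fderiv_le_of_lipschitz {E V : Type*} [NormedAddCommGroup E]
    [NormedSpace ℝ E] [NormedAddCommGroup V] [NormedSpace ℝ V] {s : Set E} (hs : Convex ℝ s)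
    {F : E → V} {F' : E → E →L[ℝ] V}
    (hFd : ∀ z ∈ s, HasFDerivAt F (F' z) z) {L : ℝ}
    (hlip : ∀ u ∈ s, ∀ v ∈ s, ‖F' u - F' v‖ ≤ L * ‖u - v‖) {x y : E} (hx : x ∈ s) (hy : y ∈ s) :
    ‖F y - F x - F' x (y - x)‖ ≤ L / 2 * ‖y - x‖ ^ 2 := by
  -- `f` below vanishes at `0` and is compared with `t ↦ L ‖y - x‖² t² / 2` on `[0, 1]`.
  set γ : ℝ → E := fun t => x + t • (y - x)
  have hγs : ∀ t ∈ Icc (0 : ℝ) 1, γ t ∈ s := fun t ht => by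
    simpa [γ] using hs.add_smul_sub_mem hx hy ht
  set f : ℝ → V := fun t => F (γ t) - t • F' x (y - x) - F x
  set f' : ℝ → V := fun t => F' (γ t) (y - x) - F' x (y - x)
  have hf : ∀ t ∈ Icc (0 : ℝ) 1, HasDerivAt f (f' t) t := fun t ht => by
    have hγ : HasDerivAt γ (y - x) t := by
      simpa [γ] using ((hasDerivAt_id t).smul_const (y - x)).const_add x
    have hFγ := (hFd (γ t) (hγs t ht)).comp_hasDerivAt t hγ
    exact ((hFγ.sub ((hasDerivAt_id t).smul_const (F' x (y - x)))).sub_const (F x)).congr_deriv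
      (by simp [f'])
  have hbound : ∀ t : ℝ, HasDerivAt (fun t => L * ‖y - x‖ ^ 2 / 2 * t ^ 2)
      (L * ‖y - x‖ ^ 2 * t) t := fun t =>
    ((hasDerivAt_pow 2 t).const_mul _).congr_deriv (by ring)
  have hf' : ∀ t ∈ Ico (0 : ℝ) 1, ‖f' t‖ ≤ L * ‖y - x‖ ^ 2 * t := fun t ht => by
    have hγx : ‖γ t - x‖ = t * ‖y - x‖ := by simp [γ, norm_smul, abs_of_nonneg ht.1]
    calc ‖f' t‖ ≤ ‖F' (γ t) - F' x‖ * ‖y - x‖ := (F' (γ t) - F' x).le_opNorm (y - x)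
      _ ≤ L * (t * ‖y - x‖) * ‖y - x‖ := by
          gcongr
          exact hγx ▸ hlip _ (hγs t (Ico_subset_Icc_self ht)) x hx
      _ = L * ‖y - x‖ ^ 2 * t := by ring
  have hf_le := image_norm_le_of_norm_deriv_right_le_deriv_boundary
    (fun t ht => (hf t ht).continuousAt.continuousWithinAt)
    (fun t ht => (hf t (Ico_subset_Icc_self ht)).hasDerivWithinAt) (by simp [f, γ]) hbound hf'
    (right_mem_Icc.2 zero_le_one)
  calc ‖F y - F x - F' x (y - x)‖ = ‖f 1‖ := by simp only [f, γ]; congr 1; simp; abel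
    _ ≤ L / 2 * ‖y - x‖ ^ 2 := by linarith

section

variable {H : Type*} [NormedAddCommGroup H] [InnerProductSpace ℝ H]

namespace ContinuousLinearMap

theorem inner_half_add_adjoint_apply_self [CompleteSpace H] (A : H →L[ℝ] H) (y : H) :
    ⟪((1 / 2 : ℝ) • (A + adjoint A)) y, y⟫ = ⟪A y, y⟫ := by
  simp only [smul_apply, add_apply, real_inner_smul_left, inner_add_left, adjoint_inner_left,
    real_inner_comm (A y) y]
  ring

theorem isPositive_half_add_adjoint [CompleteSpace H] {A : H →L[ℝ] H}
    (hA : ∀ y, 0 ≤ ⟪A y, y⟫) : ((1 / 2 : ℝ) • (A + adjoint A)).IsPositive := by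
  refine (isPositive_iff _).2 ⟨fun x y => ?_, fun y => ?_⟩
  · simp only [coe_coe, smul_apply, add_apply, real_inner_smul_left, real_inner_smul_right,
      inner_add_left, inner_add_right, adjoint_inner_left, adjoint_inner_right]
    ring
  · rw [inner_half_add_adjoint_apply_self]
    exact hA y

theorem IsPositive.inner_sq_le {A : H →L[ℝ] H} (hA : A.IsPositive) (x y : H) :
    ⟪A x, y⟫ ^ 2 ≤ ⟪A x, x⟫ * ⟪A y, y⟫ :=
  LinearMap.BilinForm.apply_sq_le_of_symm ((innerₗ H).comp (A : H →ₗ[ℝ] H))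
    hA.inner_nonneg_left
    ⟨fun x y => by simp [hA.inner_left_eq_inner_right y x, real_inner_comm]⟩ x y

theorem IsPositive.norm_sq_le_of_comp_eq_id {A G : H →L[ℝ] H} (hA : A.IsPositive)
    (hAG : A.comp G = ContinuousLinearMap.id ℝ H) (w : H) : ‖w‖ ^ 2 ≤ ‖G‖ * ⟪A w, w⟫ := by
  have hAGw : A (G w) = w := by simpa using congr($hAG w)
  have hcs : (‖w‖ ^ 2) ^ 2 ≤ ⟪w, G w⟫ * ⟪A w, w⟫ := by
    simpa [hAGw, real_inner_self_eq_norm_sq] using hA.inner_sq_le (G w) w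
  have hG : ⟪w, G w⟫ ≤ ‖G‖ * ‖w‖ ^ 2 := by
    calc ⟪w, G w⟫ ≤ ‖w‖ * ‖G w‖ := real_inner_le_norm _ _
      _ ≤ ‖w‖ * (‖G‖ * ‖w‖) := by gcongr; exact G.le_opNorm w
      _ = ‖G‖ * ‖w‖ ^ 2 := by ring
  rcases eq_or_lt_of_le (norm_nonneg w) with hw | hw
  · simp [← hw, mul_nonneg (norm_nonneg G) (hA.inner_nonneg_left w)]
  · nlinarith [hA.inner_nonneg_left w, pow_pos hw 2]

theorem ne_zero_of_comp_eq_id [Nontrivial H] {A G : H →L[ℝ] H}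
    (hAG : A.comp G = ContinuousLinearMap.id ℝ H) : G ≠ 0 := by
  rintro rfl
  obtain ⟨w, hw⟩ := exists_ne (0 : H)
  exact hw (by simpa using congr($hAG w).symm)

end ContinuousLinearMap

def IsMonotoneOperator (T : H → Set H) : Prop :=
  ∀ x y u v : H, u ∈ T y → v ∈ T x → 0 ≤ ⟪u - v, y - x⟫

theorem norm_newton_step_le {s : Set H} (hs : Convex ℝ s) {F : H → H} {F' : H → H →L[ℝ] H}
    (hFd : ∀ z ∈ s, HasFDerivAt F (F' z) z) {γ K : ℝ} (hγ : 0 < γ) (hK : 0 ≤ K)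
    (hlip : ∀ u ∈ s, ∀ v ∈ s, γ * ‖F' u - F' v‖ ≤ K * ‖u - v‖)
    {T : H → Set H} (hT : IsMonotoneOperator T) {xs x x' : H} (hxs : xs ∈ s) (hx : x ∈ s)
    (hcoer : ∀ w, ‖w‖ ^ 2 ≤ γ * ⟪F' xs w, w⟫)
    (hsol : -F xs ∈ T xs) (hstep : -(F x + F' x (x' - x)) ∈ T x') :
    (1 - K * ‖xs - x‖) * ‖xs - x'‖ ≤ K / 2 * ‖xs - x‖ ^ 2 := by
  set d := x' - xs
  set R := F xs - F x - F' x (xs - x)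
  have hmono : ⟪F' x d, d⟫ ≤ ⟪R, d⟫ := by
    have hsub : -(F x + F' x (x' - x)) - -F xs = R - F' x d := by
      simp only [R, d, map_sub]; abel
    have := hT xs x' _ _ hstep hsol
    rw [hsub, inner_sub_left] at this
    linarith
  have hR : γ * ‖R‖ ≤ K / 2 * ‖xs - x‖ ^ 2 := by
    have hlip' : ∀ u ∈ s, ∀ v ∈ s, ‖F' u - F' v‖ ≤ K / γ * ‖u - v‖ := fun u hu v hv => by
      rw [div_mul_eq_mul_div, le_div_iff₀ hγ, mul_comm]
      exact hlip u hu v hv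
    calc γ * ‖R‖ ≤ γ * (K / γ / 2 * ‖xs - x‖ ^ 2) :=
          mul_le_mul_of_nonneg_left (hs.norm_image_sub_sub_fderiv_le_of_lipschitz hFd hlip' hx hxs)
            hγ.le
      _ = K / 2 * ‖xs - x‖ ^ 2 := by field_simp
  have hdiff : γ * ⟪(F' xs - F' x) d, d⟫ ≤ K * ‖xs - x‖ * ‖d‖ ^ 2 := by
    calc γ * ⟪(F' xs - F' x) d, d⟫ ≤ γ * (‖F' xs - F' x‖ * ‖d‖ * ‖d‖) := by
          gcongr
          exact (real_inner_le_norm _ _).trans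
            (mul_le_mul_of_nonneg_right ((F' xs - F' x).le_opNorm d) (norm_nonneg d))
      _ ≤ K * ‖xs - x‖ * ‖d‖ ^ 2 := by
          nlinarith [hlip xs hxs x hx, sq_nonneg ‖d‖]
  have hquad : ‖d‖ ^ 2 ≤ γ * ‖R‖ * ‖d‖ + K * ‖xs - x‖ * ‖d‖ ^ 2 := by
    calc ‖d‖ ^ 2 ≤ γ * ⟪F' xs d, d⟫ := hcoer d
      _ = γ * ⟪F' x d, d⟫ + γ * ⟪(F' xs - F' x) d, d⟫ := by
          rw [sub_apply, inner_sub_left]; ring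
      _ ≤ γ * (‖R‖ * ‖d‖) + K * ‖xs - x‖ * ‖d‖ ^ 2 := by
          gcongr
          exact hmono.trans (real_inner_le_norm R d)
      _ = γ * ‖R‖ * ‖d‖ + K * ‖xs - x‖ * ‖d‖ ^ 2 := by ring
  rw [norm_sub_rev xs x']
  rcases (norm_nonneg d).eq_or_lt with hd | hd
  · rw [← hd, mul_zero]
    positivity
  · refine le_of_mul_le_mul_right ?_ hd
    nlinarith [mul_le_mul_of_nonneg_right hR hd.le]

end

theorem newton_lipschitz_explicit_rate_general {H : Type*} [NormedAddCommGroup H] [InnerProductSpace ℝ H] [CompleteSpace H]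
    (Ω : Set H) (F : H → H) (F' : H → H →L[ℝ] H)
    (hFd : ∀ x ∈ Ω, HasFDerivAt F (F' x) x)
    (xs : H)
    (T : H → Set H) (hT : IsMaximalMonotone T)
    (hsol : (0 : H) ∈ (fun w => F xs + w) '' T xs)
    (hpsd : ∀ y : H, 0 ≤ ⟪(F' xs) y, y⟫)
    (Ahat : H →L[ℝ] H)
    (hAhat : Ahat = (1 / 2 : ℝ) • (F' xs + ContinuousLinearMap.adjoint (F' xs)))
    (Ginv : H →L[ℝ] H)
    (hGinv2 : Ahat.comp Ginv = ContinuousLinearMap.id ℝ H)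
    (K : ℝ) (hK : 0 < K)
    (hlip : ∀ x ∈ Ω, ∀ y ∈ Ω, ‖Ginv‖ * ‖F' x - F' y‖ ≤ K * ‖x - y‖)
    (κ : ℝ) (hκ : κ = sSup {u : ℝ | 0 < u ∧ Metric.ball xs u ⊆ Ω})
    (r : ℝ) (hr : r = min κ (2 / (3 * K)))
    (xseq : ℕ → H) (hx0 : xseq 0 ∈ Metric.ball xs r) (hx0ne : xseq 0 ≠ xs)
    (hNewton : ∀ k : ℕ, (0 : H) ∈
      (fun w => F (xseq k) + (F' (xseq k)) (xseq (k + 1) - xseq k) + w) '' T (xseq (k + 1)))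
    :
    ∀ k : ℕ, ‖xs - xseq k‖ ≤ 2 / (3 * K) * (3 * K / 2 * ‖xs - xseq 0‖) ^ (2 ^ k) := by
  have : Nontrivial H := nontrivial_of_ne _ _ hx0ne
  have hG : 0 < ‖Ginv‖ := norm_pos_iff.2 (ContinuousLinearMap.ne_zero_of_comp_eq_id hGinv2)
  have hcoer : ∀ w, ‖w‖ ^ 2 ≤ ‖Ginv‖ * ⟪F' xs w, w⟫ := fun w => by
    subst hAhat
    simpa only [ContinuousLinearMap.inner_half_add_adjoint_apply_self] using
      (ContinuousLinearMap.isPositive_half_add_adjoint hpsd).norm_sq_le_of_comp_eq_id hGinv2 w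
  have hrK : r ≤ 2 / (3 * K) := hr ▸ min_le_right _ _
  have hstep (k : ℕ) (hk : ‖xs - xseq k‖ < r) :
      ‖xs - xseq (k + 1)‖ ≤ 3 * K / 2 * ‖xs - xseq k‖ ^ 2 := by
    obtain ⟨ρ, hxρ, hρΩ⟩ := exists_ball_subset_of_dist_lt_sSup (Ω := Ω) (z := xseq k)
      (by rw [← hκ, dist_eq_norm]; exact hk.trans_le (hr ▸ min_le_left _ _))
    have hρ := norm_newton_step_le (convex_ball xs ρ) (fun z hz => hFd z (hρΩ hz)) hG hK.le
      (fun u hu v hv => hlip u (hρΩ hu) v (hρΩ hv)) hT.1 (mem_ball_self (pos_of_mem_ball hxρ))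
      hxρ hcoer (zero_mem_image_add_iff.1 hsol) (zero_mem_image_add_iff.1 (hNewton k))
    have hKe : K * ‖xs - xseq k‖ < 2 / 3 := by
      have := hk.trans_le hrK
      rw [lt_div_iff₀ (by positivity)] at this
      linarith
    nlinarith [norm_nonneg (xs - xseq (k + 1))]
  have hx0r : ‖xs - xseq 0‖ < r := by rwa [mem_ball', dist_eq_norm] at hx0
  simpa only [inv_div] using le_inv_mul_pow_two_pow_of_le_mul_sq (c := 3 * K / 2)
    (e := fun k => ‖xs - xseq k‖) (by positivity)
    (fun k => norm_nonneg _) hx0r (by rwa [inv_div]) hstep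

theorem newton_lipschitz_explicit_rate {H : Type*} [NormedAddCommGroup H] [InnerProductSpace ℝ H] [CompleteSpace H]
    (Ω : Set H) (hΩ : IsOpen Ω) (F : H → H) (F' : H → H →L[ℝ] H)
    (hFd : ∀ x ∈ Ω, HasFDerivAt F (F' x) x) (hF'c : ContinuousOn F' Ω)
    (xs : H) (hxs : xs ∈ Ω)
    (T : H → Set H) (hT : IsMaximalMonotone T)
    (hsol : (0 : H) ∈ (fun w => F xs + w) '' T xs)
    (hpsd : ∀ y : H, 0 ≤ ⟪(F' xs) y, y⟫)
    (Ahat : H →L[ℝ] H)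
    (hAhat : Ahat = (1 / 2 : ℝ) • (F' xs + ContinuousLinearMap.adjoint (F' xs)))
    (Ginv : H →L[ℝ] H)
    (hGinv1 : Ginv.comp Ahat = ContinuousLinearMap.id ℝ H)
    (hGinv2 : Ahat.comp Ginv = ContinuousLinearMap.id ℝ H)
    (K : ℝ) (hK : 0 < K)
    (hlip : ∀ x ∈ Ω, ∀ y ∈ Ω, ‖Ginv‖ * ‖F' x - F' y‖ ≤ K * ‖x - y‖)
    (κ : ℝ) (hκ : κ = sSup {u : ℝ | 0 < u ∧ Metric.ball xs u ⊆ Ω})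
    (r : ℝ) (hr : r = min κ (2 / (3 * K)))
    (xseq : ℕ → H) (hx0 : xseq 0 ∈ Metric.ball xs r) (hx0ne : xseq 0 ≠ xs)
    (hNewton : ∀ k : ℕ, (0 : H) ∈
      (fun w => F (xseq k) + (F' (xseq k)) (xseq (k + 1) - xseq k) + w) '' T (xseq (k + 1)))
    :
    ∀ k : ℕ, ‖xs - xseq k‖ ≤ 2 / (3 * K) * (3 * K / 2 * ‖xs - xseq 0‖) ^ (2 ^ k) :=
  newton_lipschitz_explicit_rate_general Ω F F' hFd xs T hT hsol hpsd Ahat hAhat Ginv hGinv2 K hK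
    hlip κ hκ r hr xseq hx0 hx0ne hNewton
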